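/- arXiv:2510.07225 — 5 statements merged into one kernel-verified Lean document; each statement's English description precedes it below -/
import Mathlib

section
/- Let r ≥ 2 be an integer, p ∈ (0, 1/2], and S a finite set of size r. Define φ : Set of subsets of S → ℝ by φ(T) = p^|T| · ((1-p)^(r-|T|) - (-1)^(r-|T|) · p^(r-|T|)). Then φ(T) ≥ 0 for all T ⊆ S, φ(S) = 0, and ∑_{T ⊆ S} φ(T) = 1, i.e., φ is a probability distribution on the subsets of S assigning weight 0 to S itself. -/
/-- The explicit probability distribution on subsets of a set `S` of size `r`
assigning weight `p^|T| * ((1-p)^(r-|T|) - (-1)^(r-|T|) * p^(r-|T|))` to `T ⊆ S` is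
nonnegative, vanishes on `S`, and sums to `1`. -/
theorem stmt0 {α : Type*} [DecidableEq α] (r : ℕ) (hr : 2 ≤ r)
    (p : ℝ) (hp : 0 < p) (hp2 : p ≤ 1/2)
    (S : Finset α) (hS : S.card = r)
    (φ : Finset α → ℝ)
    (hφ : ∀ T ⊆ S, φ T =
      p ^ T.card * ((1 - p) ^ (r - T.card) - (-1 : ℝ) ^ (r - T.card) * p ^ (r - T.card))) :
    (∀ T ⊆ S, 0 ≤ φ T) ∧ φ S = 0 ∧ ∑ T ∈ S.powerset, φ T = 1 := by
  refine ⟨?_, ?_, ?_⟩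
  · intro T hT
    rw [hφ T hT]
    apply mul_nonneg (by positivity)
    have hm : p ^ (r - T.card) ≤ (1 - p) ^ (r - T.card) :=
      pow_le_pow_left₀ hp.le (by linarith) _
    have hpn : (0:ℝ) ≤ p ^ (r - T.card) := by positivity
    rcases neg_one_pow_eq_or ℝ (r - T.card) with h | h <;> rw [h] <;> nlinarith
  · rw [hφ S subset_rfl, hS]
    simp
  · rw [Finset.sum_congr rfl (fun T hT => hφ T (Finset.mem_powerset.1 hT)),
      Finset.sum_powerset_apply_card
        (fun k => p ^ k * ((1 - p) ^ (r - k) - (-1 : ℝ) ^ (r - k) * p ^ (r - k))), hS]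
    have key1 := add_pow p (1 - p) r
    have key2 := add_pow p (-p) r
    have step : ∀ m ∈ Finset.range (r + 1),
        (r.choose m) • (p ^ m * ((1 - p) ^ (r - m) - (-1 : ℝ) ^ (r - m) * p ^ (r - m)))
          = p ^ m * (1 - p) ^ (r - m) * (r.choose m)
            - p ^ m * (-p) ^ (r - m) * (r.choose m) := by
      intro m _
      rw [nsmul_eq_mul, neg_pow]
      ring
    rw [Finset.sum_congr rfl step, Finset.sum_sub_distrib, ← key1, ← key2]
    have : p + (1 - p) = 1 := by ring
    rw [this, one_pow]
    have : p + -p = 0 := by ring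
    rw [this, zero_pow (by omega : r ≠ 0), sub_zero]
end

section
/- Let q > r ≥ 2 be integers and n = rq. For 0 ≤ t ≤ i ≤ r−1 define a_{t,i} = binom(r−t, i−t) · binom(n−2r+t, q−r−i+t), and a_{t,i} = 0 for t > i. Then the r×r upper-triangular matrix A = (a_{t,i})_{t,i ∈ {0,...,r−1}} is invertible, and the unique solution w of A w = 𝟙 (the all-ones vector) satisfies w_t ≥ 0 for all t ∈ {0,...,r−1}. -/
/-- Binomial coefficient for integer arguments, with the convention that it is `0`
for a negative lower argument (and determined by `Nat.choose` otherwise). -/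
def zchoose (a b : ℤ) : ℤ := if 0 ≤ b then (a.toNat.choose b.toNat : ℤ) else 0



lemma zchoose_nonneg (a b : ℤ) : 0 ≤ zchoose a b := by
  unfold zchoose; split <;> positivity

lemma zchoose_eq (a b : ℤ) (hb : 0 ≤ b) : zchoose a b = (a.toNat.choose b.toNat : ℤ) :=
  if_pos hb

lemma natkey (s j m l : ℕ) (h : (s+1)*(l+1) ≤ (j+1)*(m+1)) :
    (s+1).choose (j+1) * m.choose l ≤ s.choose j * (m+1).choose (l+1) := by
  have h1 := Nat.add_one_mul_choose_eq s j
  have h2 := Nat.add_one_mul_choose_eq m l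
  refine Nat.le_of_mul_le_mul_left ?_ (show 0 < (j+1)*(m+1) by positivity)
  calc (j+1)*(m+1) * ((s+1).choose (j+1) * m.choose l)
        = ((s+1).choose (j+1) * (j+1)) * ((m+1) * m.choose l) := by ring
      _ = ((s+1) * s.choose j) * ((m+1).choose (l+1) * (l+1)) := by
          rw [← h1, h2]
      _ = (s+1)*(l+1) * (s.choose j * (m+1).choose (l+1)) := by ring
      _ ≤ (j+1)*(m+1) * (s.choose j * (m+1).choose (l+1)) :=
          Nat.mul_le_mul_right _ h

/-- With `q > r ≥ 2`, `n = rq`, and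
`a_{t,i} = C(r−t, i−t)·C(n−2r+t, q−r−i+t)` for `t ≤ i` (and `0` for `t > i`),
the upper-triangular matrix `A = (a_{t,i})` is invertible and the unique solution `w`
of `A w = 𝟙` has all entries nonnegative. -/
theorem stmt3 (q r : ℕ) (hr : 2 ≤ r) (hq : r < q) (n : ℕ) (hn : n = r * q)
    (A : Matrix (Fin r) (Fin r) ℝ)
    (hA : ∀ t i : Fin r, A t i =
      if (t : ℕ) ≤ (i : ℕ) then
        ((zchoose ((r : ℤ) - t) ((i : ℤ) - t) *
          zchoose ((n : ℤ) - 2 * r + t) ((q : ℤ) - r - i + t) : ℤ) : ℝ)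
      else 0) :
    IsUnit A ∧ ∀ w : Fin r → ℝ, A.mulVec w = (fun _ => 1) → ∀ t : Fin r, 0 ≤ w t := by
  -- basic numeric facts
  have h2rn : 2 * r ≤ n := by
    have : 2 * r ≤ r * q := by
      calc 2 * r = r * 2 := by ring
        _ ≤ r * q := Nat.mul_le_mul_left _ (by omega)
    omega
  have hqr : q - r ≤ n - 2 * r := by
    have h1 : 2 * (q - 2) ≤ r * (q - 2) := Nat.mul_le_mul_right _ hr
    have h2 : r * (q - 2) + r * 2 = r * q := by rw [← Nat.mul_add]; congr 1; omega
    omega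
  -- entries are zero below the diagonal
  have hzero : ∀ t i : Fin r, (i : ℕ) < (t : ℕ) → A t i = 0 := by
    intro t i h; rw [hA, if_neg (by omega)]
  -- diagonal entries are positive
  have hdiag : ∀ t : Fin r, A t t =
      (((n - 2 * r + (t : ℕ)).choose (q - r) : ℕ) : ℝ) := by
    intro t
    rw [hA, if_pos le_rfl]
    have e1 : ((t : Fin r) : ℤ) - ((t : Fin r) : ℤ) = 0 := by ring
    have e2 : (q : ℤ) - r - t + t = (q : ℤ) - r := by ring
    rw [e1, e2]
    have e3 : zchoose ((r : ℤ) - t) 0 = 1 := by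
      rw [zchoose_eq _ _ le_rfl]; simp
    have e4 : zchoose ((n : ℤ) - 2 * r + t) ((q : ℤ) - r) =
        ((n - 2 * r + (t : ℕ)).choose (q - r) : ℤ) := by
      rw [zchoose_eq _ _ (by omega)]
      congr 2
      · omega
      · omega
    rw [e3, e4]; push_cast; ring
  have hdpos : ∀ t : Fin r, 0 < A t t := by
    intro t
    rw [hdiag t]
    have : 0 < (n - 2 * r + (t : ℕ)).choose (q - r) :=
      Nat.choose_pos (by omega)
    exact_mod_cast this
  -- monotonicity in t above the diagonal
  have hmono : ∀ (t i : Fin r) (h : (t : ℕ) < (i : ℕ)) (ht1 : (t : ℕ) + 1 < r),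
      A t i ≤ A ⟨(t : ℕ) + 1, ht1⟩ i := by
    intro t i h ht1
    rw [hA, hA]
    rw [if_pos (le_of_lt h), if_pos (by simp; omega)]
    rw [Int.cast_le]
    have hc : ((⟨(t : ℕ) + 1, ht1⟩ : Fin r) : ℤ) = (t : ℤ) + 1 := by
      simp
    rw [hc]
    by_cases hl : 0 ≤ (q : ℤ) - r - i + t
    · -- both entries are genuine binomials
      rw [zchoose_eq ((r:ℤ) - t) _ (by omega), zchoose_eq _ _ hl,
        zchoose_eq _ _ (by omega), zchoose_eq _ _ (by omega)]
      set T := (t : ℕ) with hT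
      set I := (i : ℕ) with hI
      have hTI : ((t : Fin r) : ℤ) = (T : ℤ) := rfl
      have hII : ((i : Fin r) : ℤ) = (I : ℤ) := rfl
      have e1 : ((r : ℤ) - t).toNat = (r - T - 1) + 1 := by omega
      have e2 : (((i : Fin r) : ℤ) - t).toNat = (I - T - 1) + 1 := by omega
      have e3 : ((n : ℤ) - 2 * r + t).toNat = n - 2 * r + T := by omega
      have e4 : ((r : ℤ) - (t + 1)).toNat = r - T - 1 := by omega
      have e5 : (((i : Fin r) : ℤ) - (t + 1)).toNat = I - T - 1 := by omega
      have e6 : ((n : ℤ) - 2 * r + (t + 1)).toNat = (n - 2 * r + T) + 1 := by omega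
      have e7 : ((q : ℤ) - r - i + (t + 1)).toNat = ((q : ℤ) - r - i + t).toNat + 1 := by
        omega
      rw [e1, e2, e3, e4, e5, e6, e7]
      have hineq : ((r - T - 1) + 1) * (((q : ℤ) - r - i + t).toNat + 1) ≤
          ((I - T - 1) + 1) * ((n - 2 * r + T) + 1) := by
        have hIr : I < r := i.isLt
        have hTr : T < r := t.isLt
        calc ((r - T - 1) + 1) * (((q : ℤ) - r - i + t).toNat + 1)
            ≤ r * (q - r) := Nat.mul_le_mul (by omega) (by omega)
          _ ≤ (n - 2 * r + T) + 1 := by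
              have h1 : r * (q - r) + r * r = r * q := by rw [← Nat.mul_add]; congr 1; omega
              have h2 : 2 * r ≤ r * r := by
                calc 2 * r ≤ r * 2 := by ring_nf; omega
                  _ ≤ r * r := Nat.mul_le_mul_left _ hr
              omega
          _ ≤ ((I - T - 1) + 1) * ((n - 2 * r + T) + 1) :=
              Nat.le_mul_of_pos_left _ (by omega)
      exact_mod_cast natkey _ _ _ _ hineq
    · -- LHS second factor vanishes
      have : zchoose ((n : ℤ) - 2 * r + t) ((q : ℤ) - r - i + t) = 0 := by
        unfold zchoose; rw [if_neg hl]
      rw [this, mul_zero]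
      exact mul_nonneg (zchoose_nonneg _ _) (zchoose_nonneg _ _)
  -- invertibility
  have hut : A.BlockTriangular id := by
    intro i j hij
    exact hzero i j hij
  have hdet : A.det = ∏ t, A t t := Matrix.det_of_upperTriangular hut
  have hdetpos : 0 < A.det := by
    rw [hdet]; exact Finset.prod_pos fun t _ => hdpos t
  refine ⟨(Matrix.isUnit_iff_isUnit_det _).2 (isUnit_iff_ne_zero.2 (ne_of_gt hdetpos)), ?_⟩
  intro w hw
  have row : ∀ t : Fin r, ∑ i, A t i * w i = 1 := by
    intro t
    have := congrFun hw t
    simpa [Matrix.mulVec, dotProduct] using this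
  have step : ∀ t : Fin r, (∀ i : Fin r, (t : ℕ) < (i : ℕ) → 0 ≤ w i) → 0 ≤ w t := by
    intro t hIH
    have hsplit : A t t * w t = 1 - ∑ i ∈ Finset.univ.erase t, A t i * w i := by
      have h0 := row t
      rw [← Finset.add_sum_erase _ _ (Finset.mem_univ t)] at h0
      linarith
    have hbound : ∑ i ∈ Finset.univ.erase t, A t i * w i ≤ 1 := by
      by_cases hlast : (t : ℕ) + 1 < r
      · set t' : Fin r := ⟨(t : ℕ) + 1, hlast⟩ with ht'
        have ht'v : (t' : ℕ) = (t : ℕ) + 1 := rfl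
        have h1 : ∑ i ∈ Finset.univ.erase t, A t i * w i ≤
            ∑ i ∈ Finset.univ.erase t, A t' i * w i := by
          apply Finset.sum_le_sum
          intro i hi
          have hne : (i : ℕ) ≠ (t : ℕ) := by
            intro hcon
            exact (Finset.ne_of_mem_erase hi) (Fin.ext hcon)
          rcases lt_or_gt_of_ne hne with hlt | hgt
          · rw [hzero t i hlt, hzero t' i (by omega)]
          · exact mul_le_mul_of_nonneg_right (hmono t i hgt hlast) (hIH i hgt)
        have h2 : ∑ i ∈ Finset.univ.erase t, A t' i * w i = 1 := by
          have h0 := row t'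
          rw [← Finset.add_sum_erase _ _ (Finset.mem_univ t)] at h0
          rw [hzero t' t (by omega)] at h0
          linarith
        linarith
      · have hz : ∀ i ∈ Finset.univ.erase t, A t i * w i = 0 := by
          intro i hi
          have hne : (i : ℕ) ≠ (t : ℕ) := by
            intro hcon
            exact (Finset.ne_of_mem_erase hi) (Fin.ext hcon)
          have : (i : ℕ) < (t : ℕ) := by have := i.isLt; omega
          rw [hzero t i this, zero_mul]
        rw [Finset.sum_eq_zero hz]
        norm_num
    have hnn : 0 ≤ A t t * w t := by rw [hsplit]; linarith
    have hmm : A t t * 0 ≤ A t t * w t := by rw [mul_zero]; exact hnn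
    exact le_of_mul_le_mul_left hmm (hdpos t)
  have all : ∀ k : ℕ, ∀ t : Fin r, r ≤ k + (t : ℕ) + 1 → 0 ≤ w t := by
    intro k
    induction k with
    | zero =>
      intro t ht
      exact step t fun i hi => absurd i.isLt (by omega)
    | succ k ih =>
      intro t ht
      exact step t fun i hi => ih i (by omega)
  exact fun t => all r t (by omega)
end

section
/- Let q > r ≥ 2 be integers and n = rq. For all integers t, i with 0 ≤ t < i ≤ r−1, we have binom(r−t, i−t) · binom(n−2r+t, q−r−i+t) ≤ binom(r−t−1, i−t−1) · binom(n−2r+t+1, q−r−i+t+1). -/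
lemma zchoose_natCast (a b : ℕ) : zchoose (a : ℤ) (b : ℤ) = a.choose b := by
  simp [zchoose]

lemma choose_key (a k m j : ℕ) (ha : 1 ≤ a) (hk : 1 ≤ k)
    (h : a * (j + 1) ≤ k * (m + 1)) :
    a.choose k * m.choose j ≤ (a - 1).choose (k - 1) * (m + 1).choose (j + 1) := by
  have h1 : a * (a - 1).choose (k - 1) = a.choose k * k := by
    have h := Nat.add_one_mul_choose_eq (a - 1) (k - 1)
    simp only [Nat.succ_eq_add_one, Nat.sub_add_cancel ha, Nat.sub_add_cancel hk] at h
    exact h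
  have h2 : (m + 1) * m.choose j = (m + 1).choose (j + 1) * (j + 1) :=
    Nat.add_one_mul_choose_eq m j
  have key : (k * (j + 1)) * (a.choose k * m.choose j)
      ≤ (k * (j + 1)) * ((a - 1).choose (k - 1) * (m + 1).choose (j + 1)) := by
    calc (k * (j + 1)) * (a.choose k * m.choose j)
        = (a * (a - 1).choose (k - 1)) * ((j + 1) * m.choose j) := by
          rw [h1]; ring
      _ = (a * (j + 1)) * ((a - 1).choose (k - 1) * m.choose j) := by ring
      _ ≤ (k * (m + 1)) * ((a - 1).choose (k - 1) * m.choose j) :=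
          Nat.mul_le_mul_right _ h
      _ = ((m + 1) * m.choose j) * (k * (a - 1).choose (k - 1)) := by ring
      _ = ((m + 1).choose (j + 1) * (j + 1)) * (k * (a - 1).choose (k - 1)) := by rw [h2]
      _ = (k * (j + 1)) * ((a - 1).choose (k - 1) * (m + 1).choose (j + 1)) := by ring
  exact Nat.le_of_mul_le_mul_left key (by positivity)

/-- For `q > r ≥ 2`, `n = rq`, and `0 ≤ t < i ≤ r−1`,
`C(r−t, i−t)·C(n−2r+t, q−r−i+t) ≤ C(r−t−1, i−t−1)·C(n−2r+t+1, q−r−i+t+1)`. -/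
theorem stmt4 (q r : ℕ) (hr : 2 ≤ r) (hq : r < q) (n : ℕ) (hn : n = r * q)
    (t i : ℕ) (ht : t < i) (hi : i ≤ r - 1) :
    zchoose ((r : ℤ) - t) ((i : ℤ) - t) *
        zchoose ((n : ℤ) - 2 * r + t) ((q : ℤ) - r - i + t)
      ≤ zchoose ((r : ℤ) - t - 1) ((i : ℤ) - t - 1) *
        zchoose ((n : ℤ) - 2 * r + t + 1) ((q : ℤ) - r - i + t + 1) := by
  have hir : i ≤ r - 1 := hi
  have hn2 : 2 * r ≤ n := by subst hn; nlinarith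
  by_cases hneg : (q : ℤ) - r - i + t < 0
  · have : zchoose ((n : ℤ) - 2 * r + t) ((q : ℤ) - r - i + t) = 0 := by
      unfold zchoose; rw [if_neg (by omega)]
    rw [this, mul_zero]
    exact mul_nonneg (zchoose_nonneg _ _) (zchoose_nonneg _ _)
  · push_neg at hneg
    -- natural number versions
    set a := r - t with hadef
    set k := i - t with hkdef
    set m := n - 2 * r + t with hmdef
    set j := q + t - (r + i) with hjdef
    have e1 : (r : ℤ) - t = ((a : ℕ) : ℤ) := by omega
    have e2 : (i : ℤ) - t = ((k : ℕ) : ℤ) := by omega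
    have e3 : (n : ℤ) - 2 * r + t = ((m : ℕ) : ℤ) := by omega
    have e4 : (q : ℤ) - r - i + t = ((j : ℕ) : ℤ) := by omega
    have e5 : (r : ℤ) - t - 1 = (((a - 1 : ℕ)) : ℤ) := by omega
    have e6 : (i : ℤ) - t - 1 = (((k - 1 : ℕ)) : ℤ) := by omega
    have e7 : (n : ℤ) - 2 * r + t + 1 = (((m + 1 : ℕ)) : ℤ) := by push_cast; omega
    have e8 : (q : ℤ) - r - i + t + 1 = (((j + 1 : ℕ)) : ℤ) := by push_cast; omega
    rw [e5, e6, e7, e8, e1, e2, e3, e4, zchoose_natCast, zchoose_natCast,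
      zchoose_natCast, zchoose_natCast]
    have keyZ : ((a : ℕ) : ℤ) * ((j : ℤ) + 1) ≤ ((k : ℕ) : ℤ) * ((m : ℤ) + 1) := by
      rw [← e1, ← e2, ← e3, ← e4]
      subst hn
      have hA : (0 : ℤ) ≤ (r : ℤ) * ((q : ℤ) - 1) := mul_nonneg (by omega) (by omega)
      have hrq : (0 : ℤ) ≤ (r : ℤ) * q - r + 1 := by linarith
      have h1 : (0 : ℤ) ≤ ((i : ℤ) - t - 1) * ((r : ℤ) * q - r + 1) :=
        mul_nonneg (by omega) hrq
      have h2 : (0 : ℤ) ≤ (t : ℤ) * ((q : ℤ) - r + 1) :=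
        mul_nonneg (by omega) (by omega)
      have h3 : (0 : ℤ) ≤ ((r : ℤ) - 1) ^ 2 := sq_nonneg _
      push_cast
      nlinarith [h1, h2, h3]
    have key : a * (j + 1) ≤ k * (m + 1) := by exact_mod_cast keyZ
    exact_mod_cast choose_key a k m j (by omega) (by omega) key
end

section
/- Let J be an r-uniform hypergraph and X ⊆ V(J) such that every vertex v ∈ V(J) \ X has degree at least 1 in J. Let m = |V(J) \ X|. Then there exists an ordering v₁, …, v_m of V(J) \ X such that the number of indices i ∈ [m] for which v_i has degree at least 1 in the induced subhypergraph J[X ∪ {v₁, …, v_i}] is at least m/r. -/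
/-!
Explore greedily: take a vertex `v ∉ X` and an edge `e ∋ v`, and list the at most `r` vertices
of `e \ X` in any order. The last of them completes `e` inside `X ∪ e`, so this batch contributes
one good index. Then recurse with `X ∪ e` in place of `X`; indices that are good for the
remaining list relative to `X ∪ e` stay good after the batch is prepended. Each good index thus
pays for at most `r` vertices.
-/

namespace Hypergraph

variable {V : Type*} [DecidableEq V] (J : Finset (Finset V)) (X : Finset V)

/-- The positions `i` at which `l[i]` has positive degree in `J[X ∪ {l[0], …, l[i]}]`. -/
def completionIndices (l : List V) : Finset ℕ :=
  (Finset.range l.length).filter fun i =>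
    ∃ h : i < l.length, ∃ e ∈ J, l[i] ∈ e ∧ e ⊆ X ∪ (l.take (i + 1)).toFinset

variable {J X}

theorem mem_completionIndices {l : List V} {i : ℕ} :
    i ∈ completionIndices J X l ↔
      ∃ h : i < l.length, ∃ e ∈ J, l[i] ∈ e ∧ e ⊆ X ∪ (l.take (i + 1)).toFinset := by
  simp only [completionIndices, Finset.mem_filter, Finset.mem_range, and_iff_right_iff_imp]
  exact fun ⟨h, _⟩ => h

theorem pred_length_mem_completionIndices_append {b : List V} (l : List V) (hb : b ≠ [])
    {e : Finset V} (he : e ∈ J) (hlast : b.getLast hb ∈ e) (heb : e ⊆ X ∪ b.toFinset) :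
    b.length - 1 ∈ completionIndices J X (b ++ l) := by
  have hpos := List.length_pos_iff.mpr hb
  refine mem_completionIndices.mpr ⟨by simp; omega, e, he, ?_, ?_⟩
  · rwa [List.getElem_append_left (by omega), ← List.getLast_eq_getElem]
  · rwa [List.take_left' (by omega)]

theorem add_length_mem_completionIndices_append {X' : Finset V} {b l : List V}
    (hX' : X' ⊆ X ∪ b.toFinset) {j : ℕ} (hj : j ∈ completionIndices J X' l) :
    b.length + j ∈ completionIndices J X (b ++ l) := by
  obtain ⟨hjl, e, he, hje, heX'⟩ := mem_completionIndices.mp hj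
  refine mem_completionIndices.mpr ⟨by simp; omega, e, he, ?_, ?_⟩
  · simpa [List.getElem_append_right] using hje
  · rw [Nat.add_assoc, List.take_length_add_append, List.toFinset_append, ← Finset.union_assoc]
    exact heX'.trans (Finset.union_subset_union_left hX')

theorem card_completionIndices_lt_append {X' : Finset V} {b : List V} (l : List V) (hb : b ≠ [])
    {e : Finset V} (he : e ∈ J) (hlast : b.getLast hb ∈ e) (heb : e ⊆ X ∪ b.toFinset)
    (hX' : X' ⊆ X ∪ b.toFinset) :
    (completionIndices J X' l).card < (completionIndices J X (b ++ l)).card := by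
  have hpos := List.length_pos_iff.mpr hb
  have hsub : insert (b.length - 1) ((completionIndices J X' l).map (addLeftEmbedding b.length))
      ⊆ completionIndices J X (b ++ l) := by
    refine Finset.insert_subset (pred_length_mem_completionIndices_append l hb he hlast heb) ?_
    intro i hi
    obtain ⟨j, hj, rfl⟩ := Finset.mem_map.mp hi
    exact add_length_mem_completionIndices_append hX' hj
  have hnotMem : b.length - 1 ∉ (completionIndices J X' l).map (addLeftEmbedding b.length) := by
    simp only [Finset.mem_map, addLeftEmbedding_apply, not_exists, not_and]
    omega
  simpa [Finset.card_insert_of_notMem hnotMem] using Finset.card_le_card hsub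

theorem card_completionIndices_le_ncard (l : List V) :
    (completionIndices J X l).card ≤ Set.ncard {i : Fin l.length |
      ∃ e ∈ J, l.get i ∈ e ∧ (e : Set V) ⊆ (X : Set V) ∪ l.get '' {j | j ≤ i}} := by
  rw [← Set.ncard_image_of_injective _ Fin.val_injective, ← Set.ncard_coe_finset]
  refine Set.ncard_le_ncard ?_ (Set.toFinite _)
  intro i hi
  obtain ⟨hil, e, he, hie, heX⟩ := mem_completionIndices.mp hi
  refine ⟨⟨i, hil⟩, ⟨e, he, hie, fun x hx => ?_⟩, rfl⟩
  rcases Finset.mem_union.mp (heX hx) with hxX | hxl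
  · exact Or.inl hxX
  · obtain ⟨j, hj, rfl⟩ := List.mem_take_iff_getElem.mp (List.mem_toFinset.mp hxl)
    exact Or.inr ⟨⟨j, by omega⟩, Fin.mk_le_mk.mpr (by omega), by simp⟩

variable [Fintype V]

theorem exists_ordering_card_le_mul_card_completionIndices {r : ℕ}
    (hJ : ∀ e ∈ J, e.card ≤ r) (X : Finset V) (hdeg : ∀ v ∉ X, ∃ e ∈ J, v ∈ e) :
    ∃ l : List V, l.Nodup ∧ l.toFinset = Finset.univ \ X ∧
      (Finset.univ \ X).card ≤ r * (completionIndices J X l).card := by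
  induction hn : (Finset.univ \ X).card using Nat.strong_induction_on generalizing X with
  | _ n ih =>
  obtain hX | ⟨v, hv⟩ := (Finset.univ \ X).eq_empty_or_nonempty
  · exact ⟨[], List.nodup_nil, hX.symm, by simp [← hn, hX]⟩
  obtain ⟨e, he, hve⟩ := hdeg v (by simpa using hv)
  set b := (e \ X).toList
  have hvb : v ∈ e \ X := Finset.mem_sdiff.mpr ⟨hve, (Finset.mem_sdiff.mp hv).2⟩
  have hb : b ≠ [] := List.ne_nil_of_mem (Finset.mem_toList.mpr hvb)
  have hbe : b.toFinset = e \ X := by simp [b]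
  have hsplit : Finset.univ \ X = e \ X ∪ Finset.univ \ (X ∪ e) := by ext; simp; tauto
  have hdisj : Disjoint (e \ X) (Finset.univ \ (X ∪ e)) := by
    rw [Finset.disjoint_left]; simp; tauto
  have hcard : n = (e \ X).card + (Finset.univ \ (X ∪ e)).card := by
    rw [← hn, hsplit, Finset.card_union_of_disjoint hdisj]
  have hlt : (Finset.univ \ (X ∪ e)).card < n := by
    have := Finset.card_pos.mpr ⟨v, hvb⟩
    omega
  obtain ⟨l, hl, hlX, hcount⟩ :=
    ih _ hlt (X ∪ e) (fun w hw => hdeg w fun hwX => hw (Finset.mem_union_left e hwX)) rfl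
  have hXb : X ∪ b.toFinset = X ∪ e := by rw [hbe, Finset.union_sdiff_self_eq_union]
  have hlast : b.getLast hb ∈ e :=
    (Finset.mem_sdiff.mp (Finset.mem_toList.mp (b.getLast_mem hb))).1
  have hgrow := card_completionIndices_lt_append l hb he hlast
    (hXb ▸ Finset.subset_union_right) hXb.ge
  refine ⟨b ++ l, ?_, ?_, ?_⟩
  · refine (Finset.nodup_toList _).append hl (List.disjoint_toFinset_iff_disjoint.mp ?_)
    rwa [hbe, hlX]
  · rw [List.toFinset_append, hbe, hlX, hsplit]
  · calc n = (e \ X).card + (Finset.univ \ (X ∪ e)).card := hcard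
      _ ≤ r + r * (completionIndices J (X ∪ e) l).card :=
        Nat.add_le_add ((Finset.card_le_card Finset.sdiff_subset).trans (hJ e he)) hcount
      _ ≤ r * (completionIndices J X (b ++ l)).card := by
        rw [add_comm, ← Nat.mul_succ]
        exact Nat.mul_le_mul_left r hgrow

end Hypergraph

open Hypergraph in
theorem stmt9_general {V : Type*} [Fintype V] [DecidableEq V] (r : ℕ)
    (J : Finset (Finset V)) (hJ : ∀ e ∈ J, e.card = r)
    (X : Finset V) (hdeg : ∀ v ∈ Finset.univ \ X, ∃ e ∈ J, v ∈ e)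
    (m : ℕ) (hm : m = (Finset.univ \ X).card) :
    ∃ v : Fin m → V, Function.Injective v ∧ (∀ i, v i ∉ X) ∧
      m ≤ r * Set.ncard {i : Fin m |
        ∃ e ∈ J, v i ∈ e ∧ (e : Set V) ⊆ (X : Set V) ∪ v '' {j : Fin m | j ≤ i}} := by
  obtain ⟨l, hl, hlX, hcount⟩ := exists_ordering_card_le_mul_card_completionIndices
    (fun e he => (hJ e he).le) X
    (fun v hv => hdeg v (Finset.mem_sdiff.mpr ⟨Finset.mem_univ v, hv⟩))
  obtain rfl : l.length = m := by rw [hm, ← hlX, List.toFinset_card_of_nodup hl]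
  refine ⟨l.get, List.nodup_iff_injective_get.mp hl, fun i hi => ?_, ?_⟩
  · have : l.get i ∈ l.toFinset := List.mem_toFinset.mpr (List.get_mem l i)
    rw [hlX] at this
    exact (Finset.mem_sdiff.mp this).2 hi
  · calc l.length = (Finset.univ \ X).card := hm
      _ ≤ r * (completionIndices J X l).card := hcount
      _ ≤ _ := Nat.mul_le_mul_left r (card_completionIndices_le_ncard l)

/-- edge exploration ordering: if every vertex of `V(J) \ X` has degree
at least 1 in the `r`-uniform hypergraph `J`, and `m = |V(J) \ X|`, then there is an
ordering `v₁, …, v_m` of `V(J) \ X` such that at least `m/r` of the indices `i`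
satisfy that `v_i` has degree at least 1 in the induced subhypergraph
`J[X ∪ {v₁, …, v_i}]`. -/
theorem stmt9 {V : Type*} [Fintype V] [DecidableEq V] (r : ℕ) (hr : 2 ≤ r)
    (J : Finset (Finset V)) (hJ : ∀ e ∈ J, e.card = r)
    (X : Finset V) (hdeg : ∀ v ∈ Finset.univ \ X, ∃ e ∈ J, v ∈ e)
    (m : ℕ) (hm : m = (Finset.univ \ X).card) :
    ∃ v : Fin m → V, Function.Injective v ∧ (∀ i, v i ∉ X) ∧
      m ≤ r * Set.ncard {i : Fin m |
        ∃ e ∈ J, v i ∈ e ∧ (e : Set V) ⊆ (X : Set V) ∪ v '' {j : Fin m | j ≤ i}} :=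
  stmt9_general r J hJ X hdeg m hm
end

section
/- Suppose for each integer m ≥ 1 and each matching M in K_n^r (n ≥ Cq) the hypergraph K_n^r − M admits a fractional K_q^r-decomposition whenever n ≥ Cq. Then by induction: for every m ≥ 1, every n ≥ C^m q, and every union M of m matchings in K_n^r, the hypergraph K_n^r − M admits a fractional K_q^r-decomposition. Formally: if for all q' > r and n' ≥ Cq' and matchings M', K_{n'}^r − M' has a fractional K_{q'}^r-decomposition, then for all m ≥ 1, q > r, n ≥ C^m q, and M a union of m matchings in K_n^r, K_n^r − M has a fractional K_q^r-decomposition. -/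
open scoped Classical

/-- A fractional `K_q^r`-decomposition of the `r`-graph with edge set `G` on vertex type `V`:
nonnegative weights supported on `q`-sets all of whose `r`-subsets are edges of `G`, such
that every edge of `G` receives total weight exactly `1`. -/
def HasFracDecomp {V : Type*} [Fintype V] [DecidableEq V]
    (r q : ℕ) (G : Finset (Finset V)) : Prop :=
  ∃ Φ : Finset V → ℝ, (∀ Q, 0 ≤ Φ Q) ∧
    (∀ Q, Φ Q ≠ 0 → Q.card = q ∧ ∀ e ⊆ Q, e.card = r → e ∈ G) ∧
    ∀ e ∈ G,
      ∑ Q ∈ Finset.univ.filter (fun Q : Finset V =>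
          Q.card = q ∧ (∀ e' ⊆ Q, e'.card = r → e' ∈ G) ∧ e ⊆ Q), Φ Q = 1

/-- `M` is a matching of `r`-edges: edges of size `r`, pairwise vertex-disjoint. -/
def IsMatching {V : Type*} [DecidableEq V] (r : ℕ) (M : Finset (Finset V)) : Prop :=
  (∀ e ∈ M, e.card = r) ∧ (M : Set (Finset V)).Pairwise Disjoint

lemma sum_support_eq {V : Type*} [Fintype V] [DecidableEq V] {r q : ℕ}
    {Φ : Finset V → ℝ} {G : Finset (Finset V)}
    (hsupp : ∀ Q, Φ Q ≠ 0 → Q.card = q ∧ ∀ e ⊆ Q, e.card = r → e ∈ G) (e : Finset V) :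
    ∑ Q ∈ Finset.univ.filter (fun Q : Finset V =>
        Q.card = q ∧ (∀ e' ⊆ Q, e'.card = r → e' ∈ G) ∧ e ⊆ Q), Φ Q
      = ∑ Q ∈ Finset.univ.filter (fun Q : Finset V => e ⊆ Q), Φ Q := by
  apply Finset.sum_subset
  · intro Q hQ
    simp only [Finset.mem_filter] at *
    exact ⟨hQ.1, hQ.2.2.2⟩
  · intro Q hQ hQn
    by_contra h
    obtain ⟨h1, h2⟩ := hsupp Q h
    simp only [Finset.mem_filter] at hQ hQn
    exact hQn ⟨hQ.1, h1, h2, hQ.2⟩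

lemma frac_transport {V W : Type*} [Fintype V] [DecidableEq V] [Fintype W] [DecidableEq W]
    (r q : ℕ) (f : V ↪ W) (G : Finset (Finset V)) (h : HasFracDecomp r q G) :
    HasFracDecomp r q (G.image (Finset.image f)) := by
  obtain ⟨Φ, h0, hsupp, hsum⟩ := h
  have ginj : Function.Injective (Finset.image f) := Finset.image_injective f.injective
  set g : Finset V → Finset W := Finset.image f with hg
  refine ⟨fun S => ∑ T ∈ Finset.univ.filter (fun T => g T = S), Φ T, ?_, ?_, ?_⟩
  · intro S; exact Finset.sum_nonneg fun T _ => h0 T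
  · intro S hS
    obtain ⟨T, hT, hTne⟩ := Finset.exists_ne_zero_of_sum_ne_zero hS
    simp only [Finset.mem_filter] at hT
    obtain ⟨hTcard, hTsub⟩ := hsupp T hTne
    obtain ⟨-, rfl⟩ := hT
    constructor
    · rw [hg]; rw [Finset.card_image_of_injective _ f.injective, hTcard]
    · intro e he hecard
      obtain ⟨e0, he0T, he0⟩ := Finset.subset_image_iff.mp he
      subst he0
      exact Finset.mem_image_of_mem _ (hTsub e0 he0T (by
        rwa [Finset.card_image_of_injective _ f.injective] at hecard))
  · intro e' he'
    obtain ⟨e, heG, hee⟩ := Finset.mem_image.mp he'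
    subst hee
    -- reduce to unfiltered sum
    have hsupp' : ∀ S, (∑ T ∈ Finset.univ.filter (fun T => g T = S), Φ T) ≠ 0 →
        S.card = q ∧ ∀ e2 ⊆ S, e2.card = r → e2 ∈ G.image (Finset.image f) := by
      intro S hS
      obtain ⟨T, hT, hTne⟩ := Finset.exists_ne_zero_of_sum_ne_zero hS
      simp only [Finset.mem_filter] at hT
      obtain ⟨hTcard, hTsub⟩ := hsupp T hTne
      obtain ⟨-, rfl⟩ := hT
      refine ⟨by rw [hg, Finset.card_image_of_injective _ f.injective, hTcard], ?_⟩
      intro e2 he2 he2card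
      obtain ⟨e0, he0T, he0⟩ := Finset.subset_image_iff.mp he2
      subst he0
      exact Finset.mem_image_of_mem _ (hTsub e0 he0T (by
        rwa [Finset.card_image_of_injective _ f.injective] at he2card))
    rw [sum_support_eq hsupp']
    have key : ∑ S ∈ Finset.univ.filter (fun S : Finset W => g e ⊆ S),
          (∑ T ∈ Finset.univ.filter (fun T => g T = S), Φ T)
        = ∑ T ∈ Finset.univ.filter (fun T : Finset V => e ⊆ T), Φ T := by
      have him : ((Finset.univ.filter (fun T : Finset V => e ⊆ T)).image g)
          ⊆ Finset.univ.filter (fun S : Finset W => g e ⊆ S) := by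
        intro S hS
        obtain ⟨T, hT, hTS⟩ := Finset.mem_image.mp hS
        simp only [Finset.mem_filter] at hT ⊢
        exact ⟨Finset.mem_univ _, hTS ▸ Finset.image_subset_image hT.2⟩
      rw [← Finset.sum_subset him ?_]
      · rw [Finset.sum_image (fun x _ y _ h => ginj h)]
        apply Finset.sum_congr rfl
        intro T hT
        have : Finset.univ.filter (fun T' => g T' = g T) = {T} := by
          ext T'; simp [ginj.eq_iff]
        rw [this, Finset.sum_singleton]
      · intro S hS hSn
        by_contra hne
        obtain ⟨T, hT, hTne⟩ := Finset.exists_ne_zero_of_sum_ne_zero hne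
        simp only [Finset.mem_filter] at hT hS
        apply hSn
        apply Finset.mem_image.mpr
        refine ⟨T, ?_, hT.2⟩
        simp only [Finset.mem_filter]
        have h2 := hS.2
        rw [← hT.2] at h2
        exact ⟨Finset.mem_univ _, (Finset.image_subset_image_iff f.injective).mp h2⟩
    rw [key, ← sum_support_eq hsupp e]
    exact hsum e heG

lemma base_restricted (r C : ℕ)
    (hbase : ∀ q' n' : ℕ, r < q' → C * q' ≤ n' →
      ∀ M' : Finset (Finset (Fin n')), IsMatching r M' →
        HasFracDecomp r q' ((Finset.univ : Finset (Fin n')).powersetCard r \ M'))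
    {n : ℕ} (Q : Finset (Fin n)) (q' : ℕ) (hq : r < q') (hcard : C * q' ≤ Q.card)
    (M : Finset (Finset (Fin n))) (hM : IsMatching r M) :
    HasFracDecomp r q' (Q.powersetCard r \ M) := by
  set f : Fin Q.card ↪ Fin n :=
    Q.equivFin.symm.toEmbedding.trans (Function.Embedding.subtype _) with hf
  have hrange : Finset.univ.image f = Q := by
    ext w
    simp only [Finset.mem_image, Finset.mem_univ, true_and]
    constructor
    · rintro ⟨i, rfl⟩
      exact (Q.equivFin.symm i).2
    · intro hw
      exact ⟨Q.equivFin ⟨w, hw⟩, by simp [hf]⟩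
  set M' : Finset (Finset (Fin Q.card)) :=
    ((Finset.univ : Finset (Fin Q.card)).powersetCard r).filter
      (fun e => e.image f ∈ M) with hM'
  have hM'match : IsMatching r M' := by
    constructor
    · intro e he
      simp only [hM', Finset.mem_filter, Finset.mem_powersetCard_univ] at he
      exact he.1
    · intro e1 he1 e2 he2 hne
      simp only [hM', Finset.coe_filter, Set.mem_setOf_eq,
        Finset.mem_powersetCard_univ] at he1 he2
      have himne : e1.image f ≠ e2.image f :=
        fun h => hne (Finset.image_injective f.injective h)
      have hdisj := hM.2 he1.2 he2.2 himne
      rw [Finset.disjoint_left] at hdisj ⊢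
      intro a ha1 ha2
      exact hdisj (Finset.mem_image_of_mem f ha1) (Finset.mem_image_of_mem f ha2)
  have hdec := hbase q' Q.card hq hcard M' hM'match
  have htrans := frac_transport r q' f _ hdec
  have himeq : (((Finset.univ : Finset (Fin Q.card)).powersetCard r \ M').image
      (Finset.image f)) = Q.powersetCard r \ M := by
    ext e
    simp only [Finset.mem_image, Finset.mem_sdiff, Finset.mem_powersetCard_univ,
      Finset.mem_powersetCard]
    constructor
    · rintro ⟨e0, ⟨⟨-, he0c⟩, he0M⟩, rfl⟩
      refine ⟨⟨?_, ?_⟩, ?_⟩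
      · have := Finset.image_subset_image (f := f) (Finset.subset_univ e0)
        rwa [hrange] at this
      · rw [Finset.card_image_of_injective _ f.injective]; exact he0c
      · intro hmem
        exact he0M (by simp only [hM', Finset.mem_filter,
          Finset.mem_powersetCard_univ]; exact ⟨he0c, hmem⟩)
    · rintro ⟨⟨heQ, hec⟩, heM⟩
      rw [← hrange] at heQ
      obtain ⟨e0, -, rfl⟩ := Finset.subset_image_iff.mp heQ
      have he0c : e0.card = r := by
        rwa [Finset.card_image_of_injective _ f.injective] at hec
      refine ⟨e0, ⟨⟨Finset.subset_univ _, he0c⟩, ?_⟩, rfl⟩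
      intro hmem
      simp only [hM', Finset.mem_filter] at hmem
      exact heM hmem.2
  rwa [himeq] at htrans

lemma concat {V : Type*} [Fintype V] [DecidableEq V] (r q N : ℕ) (hr : 1 ≤ r) (hrq : r ≤ q)
    (G G' : Finset (Finset V)) (hsub : G' ⊆ G)
    (hΦ : HasFracDecomp r N G)
    (hQdec : ∀ Q : Finset V, Q.card = N → (∀ e ⊆ Q, e.card = r → e ∈ G) →
      HasFracDecomp r q (G'.filter (· ⊆ Q))) :
    HasFracDecomp r q G' := by
  obtain ⟨Φ, h0, hsupp, hsum⟩ := hΦ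
  have hψex : ∀ Q : Finset V, ∃ ψQ : Finset V → ℝ, (∀ S, 0 ≤ ψQ S) ∧
      (Q.card = N → (∀ e ⊆ Q, e.card = r → e ∈ G) →
        ((∀ S, ψQ S ≠ 0 → S.card = q ∧ ∀ e ⊆ S, e.card = r → e ∈ G'.filter (· ⊆ Q)) ∧
        ∀ e ∈ G'.filter (· ⊆ Q),
          ∑ S ∈ Finset.univ.filter (fun S : Finset V =>
            S.card = q ∧ (∀ e' ⊆ S, e'.card = r → e' ∈ G'.filter (· ⊆ Q)) ∧ e ⊆ S),
            ψQ S = 1)) := by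
    intro Q
    by_cases h : Q.card = N ∧ ∀ e ⊆ Q, e.card = r → e ∈ G
    · obtain ⟨ψQ, a, b, c⟩ := hQdec Q h.1 h.2
      exact ⟨ψQ, a, fun _ _ => ⟨b, c⟩⟩
    · refine ⟨0, fun _ => le_refl _, fun h1 h2 => absurd ⟨h1, h2⟩ h⟩
  choose ψ hψ0 hψprop using hψex
  -- subset-of-Q fact
  have hψsub : ∀ Q, Q.card = N → (∀ e ⊆ Q, e.card = r → e ∈ G) →
      ∀ S, ψ Q S ≠ 0 → S ⊆ Q := by
    intro Q hc hG S hS x hx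
    obtain ⟨hScard, hSsub⟩ := (hψprop Q hc hG).1 S hS
    obtain ⟨u, hxu, huS, hucard⟩ := Finset.exists_subsuperset_card_eq (n := r)
      (Finset.singleton_subset_iff.mpr hx) (by simpa using hr) (by rw [hScard]; exact hrq)
    have := hSsub u huS hucard
    simp only [Finset.mem_filter] at this
    exact this.2 (hxu (Finset.mem_singleton_self x))
  refine ⟨fun S => ∑ Q : Finset V, Φ Q * ψ Q S, ?_, ?_, ?_⟩
  · intro S
    exact Finset.sum_nonneg fun Q _ => mul_nonneg (h0 Q) (hψ0 Q S)
  · intro S hS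
    obtain ⟨Q, -, hQne⟩ := Finset.exists_ne_zero_of_sum_ne_zero hS
    have hΦQ : Φ Q ≠ 0 := fun h => hQne (by rw [h, zero_mul])
    have hψQ : ψ Q S ≠ 0 := fun h => hQne (by rw [h, mul_zero])
    obtain ⟨hQcard, hQG⟩ := hsupp Q hΦQ
    obtain ⟨hScard, hSsub⟩ := (hψprop Q hQcard hQG).1 S hψQ
    refine ⟨hScard, fun e he hec => ?_⟩
    have := hSsub e he hec
    simp only [Finset.mem_filter] at this
    exact this.1
  · intro e heG'
    have hsupp'' : ∀ S : Finset V, (∑ Q : Finset V, Φ Q * ψ Q S) ≠ 0 →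
        S.card = q ∧ ∀ e2 ⊆ S, e2.card = r → e2 ∈ G' := by
      intro S hS
      obtain ⟨Q, -, hQne⟩ := Finset.exists_ne_zero_of_sum_ne_zero hS
      have hΦQ : Φ Q ≠ 0 := fun h => hQne (by rw [h, zero_mul])
      have hψQ : ψ Q S ≠ 0 := fun h => hQne (by rw [h, mul_zero])
      obtain ⟨hQcard, hQG⟩ := hsupp Q hΦQ
      obtain ⟨hScard, hSsub⟩ := (hψprop Q hQcard hQG).1 S hψQ
      refine ⟨hScard, fun e2 he2 he2c => ?_⟩
      have := hSsub e2 he2 he2c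
      simp only [Finset.mem_filter] at this
      exact this.1
    rw [sum_support_eq hsupp'', Finset.sum_comm]
    have heG : e ∈ G := hsub heG'
    have hterm : ∀ Q : Finset V,
        (∑ S ∈ Finset.univ.filter (fun S : Finset V => e ⊆ S), Φ Q * ψ Q S)
          = if e ⊆ Q then Φ Q else 0 := by
      intro Q
      by_cases hΦQ : Φ Q = 0
      · simp [hΦQ]
      obtain ⟨hQcard, hQG⟩ := hsupp Q hΦQ
      by_cases heQ : e ⊆ Q
      · rw [if_pos heQ]
        rw [← Finset.mul_sum]
        have heGQ : e ∈ G'.filter (· ⊆ Q) := Finset.mem_filter.mpr ⟨heG', heQ⟩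
        have h1 := (hψprop Q hQcard hQG).2 e heGQ
        have hψsupp : ∀ S, ψ Q S ≠ 0 → S.card = q ∧
            ∀ e2 ⊆ S, e2.card = r → e2 ∈ G'.filter (· ⊆ Q) :=
          (hψprop Q hQcard hQG).1
        rw [sum_support_eq hψsupp e] at h1
        rw [h1, mul_one]
      · rw [if_neg heQ]
        apply Finset.sum_eq_zero
        intro S hS
        simp only [Finset.mem_filter] at hS
        by_cases hψQS : ψ Q S = 0
        · rw [hψQS, mul_zero]
        · exact absurd (hS.2.trans (hψsub Q hQcard hQG S hψQS)) heQ
    rw [Finset.sum_congr rfl (fun Q _ => hterm Q)]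
    rw [Finset.sum_ite, Finset.sum_const_zero, add_zero]
    rw [← sum_support_eq hsupp e]
    exact hsum e heG

/-- induction for deleting multiple matchings: if for all `q' > r`,
`n' ≥ Cq'` and matchings `M'`, the hypergraph `K_{n'}^r − M'` has a fractional
`K_{q'}^r`-decomposition, then for all `m ≥ 1`, `q > r`, `n ≥ C^m q`, and `M` a union of
`m` matchings in `K_n^r`, the hypergraph `K_n^r − M` has a fractional
`K_q^r`-decomposition. -/
theorem stmt17 (r C : ℕ) (hr : 2 ≤ r) (hC : 1 ≤ C)
    (hbase : ∀ q' n' : ℕ, r < q' → C * q' ≤ n' →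
      ∀ M' : Finset (Finset (Fin n')), IsMatching r M' →
        HasFracDecomp r q' ((Finset.univ : Finset (Fin n')).powersetCard r \ M')) :
    ∀ m q n : ℕ, 1 ≤ m → r < q → C ^ m * q ≤ n →
      ∀ Ms : Fin m → Finset (Finset (Fin n)), (∀ i, IsMatching r (Ms i)) →
        HasFracDecomp r q
          ((Finset.univ : Finset (Fin n)).powersetCard r \ Finset.univ.biUnion Ms) := by
  intro m
  induction m with
  | zero => exact fun q n hm => absurd hm (by omega)
  | succ m IH =>
    intro q n _ hq hn Ms hMs
    rcases Nat.eq_zero_or_pos m with rfl | hm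
    · have hb := hbase q n hq (by simpa using hn) (Ms 0) (hMs 0)
      have hun : Finset.univ.biUnion Ms = Ms 0 := by
        ext e
        simp only [Finset.mem_biUnion, Finset.mem_univ, true_and]
        exact ⟨fun ⟨i, hi⟩ => by rwa [Fin.eq_zero i] at hi, fun h => ⟨0, h⟩⟩
      rw [hun]
      exact hb
    · have hq' : r < C * q := lt_of_lt_of_le hq (Nat.le_mul_of_pos_left q hC)
      have hn' : C ^ m * (C * q) ≤ n := by
        rw [← mul_assoc, ← pow_succ]
        exact hn
      have hΦ := IH (C * q) n hm hq' hn' (fun i => Ms i.castSucc)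
        (fun i => hMs i.castSucc)
      apply concat r q (C * q) (by omega) (le_of_lt hq)
        ((Finset.univ : Finset (Fin n)).powersetCard r \
          Finset.univ.biUnion (fun i : Fin m => Ms i.castSucc))
        _ ?_ hΦ
      · intro Q hQcard hQG
        have heq : ((Finset.univ : Finset (Fin n)).powersetCard r \
            Finset.univ.biUnion Ms).filter (· ⊆ Q)
            = Q.powersetCard r \ Ms (Fin.last m) := by
          ext e
          simp only [Finset.mem_filter, Finset.mem_sdiff, Finset.mem_powersetCard_univ,
            Finset.mem_powersetCard, Finset.mem_biUnion, Finset.mem_univ, true_and,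
            not_exists]
          constructor
          · rintro ⟨⟨⟨-, hec⟩, hnb⟩, heQ⟩
            exact ⟨⟨heQ, hec⟩, hnb (Fin.last m)⟩
          · rintro ⟨⟨heQ, hec⟩, hlast⟩
            refine ⟨⟨⟨Finset.subset_univ _, hec⟩, ?_⟩, heQ⟩
            intro i hei
            induction i using Fin.lastCases with
            | last => exact hlast hei
            | cast j =>
              have heG := hQG e heQ hec
              simp only [Finset.mem_sdiff, Finset.mem_biUnion, Finset.mem_univ,
                true_and, not_exists] at heG
              exact heG.2 j hei
        rw [heq]
        exact base_restricted r C hbase Q q hq (by rw [hQcard]) (Ms (Fin.last m)) (hMs _)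
      · exact Finset.sdiff_subset_sdiff (le_refl _) (by
          intro e he
          obtain ⟨i, -, hei⟩ := Finset.mem_biUnion.mp he
          exact Finset.mem_biUnion.mpr ⟨i.castSucc, Finset.mem_univ _, hei⟩)
end
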